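/- arXiv:1811.09434 — 5 statements merged into one kernel-verified Lean document; each statement's English description precedes it below -/
import Mathlib

section
/- Let F be a free group of finite rank n and A = F/[F,F] its abelianization. For each k ≥ 1, there is a surjective homomorphism from the k-fold tensor product A ⊗ A ⊗ ... ⊗ A (over ℤ) onto the lower central quotient γ_k(F)/γ_{k+1}(F), sending x̄_1 ⊗ ... ⊗ x̄_k to the class of the left-normalized commutator [x_1, x_2, ..., x_k]. -/
/-!
Write `Q k = γₖ / γₖ₊₁`; it is abelian because `⁅γₖ, G⁆ = γₖ₊₁`. For fixed `y`, the map
`v ↦ ⁅v, y⁆` induces a homomorphism `Q k → Q (k + 1)`, and this bracket is also multiplicative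
in `y`, hence factors through `Gᵃᵇ`; both facts are commutator identities modulo `γₖ₊₂`.
Iterating the bracket, starting from `Q 0 = Gᵃᵇ`, gives a map `(Gᵃᵇ)ᵏ⁺¹ → Q k` that is
multiplicative in each variable and sends `(x̄₀, …, x̄ₖ)` to the class of `[x₀, …, xₖ]`, so it
lifts to the tensor power. It is onto because `γₖ₊₁` is generated by the `⁅p, y⁆` with `p ∈ γₖ`,
so by induction `Q k` is generated by classes of left-normalized commutators.
-/

open scoped TensorProduct
open scoped commutatorElement

/-- The left-normalized commutator `[x 0, x 1, ..., x k]`. -/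
def leftNormalizedCommutator {G : Type*} [Group G] {k : ℕ} (x : Fin (k + 1) → G) : G :=
  (List.ofFn fun i : Fin k => x i.succ).foldl (fun a b => ⁅a, b⁆) (x 0)

open Function

def MultilinearMap.ofIntAdditive {ι : Type*} [DecidableEq ι] {M : ι → Type*} {N : Type*}
    [∀ i, AddCommGroup (M i)] [AddCommGroup N] (f : (∀ i, M i) → N)
    (hf : ∀ m i (a b : M i), f (update m i (a + b)) = f (update m i a) + f (update m i b)) :
    MultilinearMap ℤ M N :=
  MultilinearMap.mk' f hf fun m i c a =>
    map_zsmul (AddMonoidHom.mk' (fun t => f (update m i t)) (hf m i)) c a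

section LowerCentralSeries

variable {G : Type*} [Group G]

local notation "γ" => Subgroup.lowerCentralSeries (⊤ : Subgroup G)

theorem leftNormalizedCommutator_succ {k : ℕ} (x : Fin (k + 2) → G) :
    leftNormalizedCommutator x = ⁅leftNormalizedCommutator (Fin.init x), x (Fin.last _)⁆ := by
  rw [leftNormalizedCommutator, leftNormalizedCommutator,
    List.ofFn_succ' (fun i : Fin (k + 1) => x i.succ), List.concat_eq_append, List.foldl_append]
  simp [Fin.init, Fin.succ_last]

theorem commutatorElement_mem_lowerCentralSeries_succ {m : ℕ} {g : G} (hg : g ∈ γ m) (y : G) :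
    ⁅g, y⁆ ∈ γ (m + 1) :=
  Subgroup.commutator_mem_commutator hg (Subgroup.mem_top y)

theorem leftNormalizedCommutator_mem_lowerCentralSeries {k : ℕ} (x : Fin (k + 1) → G) :
    leftNormalizedCommutator x ∈ γ k := by
  induction k with
  | zero => exact Subgroup.mem_top _
  | succ k ih =>
    rw [leftNormalizedCommutator_succ]
    exact commutatorElement_mem_lowerCentralSeries_succ (ih _) _

end LowerCentralSeries

-- Indexed from `γ 0 = G`: this is the paper's `γ_{k+1}(G)/γ_{k+2}(G)`.
abbrev LowerCentralQuotient (G : Type*) [Group G] (k : ℕ) : Type _ :=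
  Subgroup.lowerCentralSeries (⊤ : Subgroup G) k ⧸
    (Subgroup.lowerCentralSeries (⊤ : Subgroup G) (k + 1)).subgroupOf
      (Subgroup.lowerCentralSeries (⊤ : Subgroup G) k)

namespace LowerCentralQuotient

variable {G : Type*} [Group G] {k : ℕ}

local notation "γ" => Subgroup.lowerCentralSeries (⊤ : Subgroup G)

theorem mk_eq_mk_iff {v w : γ k} :
    (QuotientGroup.mk v : LowerCentralQuotient G k) = QuotientGroup.mk w ↔
      ((v⁻¹ * w : γ k) : G) ∈ γ (k + 1) :=
  QuotientGroup.eq.trans Subgroup.mem_subgroupOf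

instance : CommGroup (LowerCentralQuotient G k) where
  mul_comm u v := by
    induction u using QuotientGroup.induction_on with | H a => ?_
    induction v using QuotientGroup.induction_on with | H b => ?_
    rw [← QuotientGroup.mk_mul, ← QuotientGroup.mk_mul, mk_eq_mk_iff]
    have hcomm : (((a * b)⁻¹ * (b * a) : γ k) : G) = ⁅(b : G)⁻¹, (a : G)⁻¹⁆ := by
      simp only [Subgroup.coe_mul, Subgroup.coe_inv, commutatorElement_def]; group
    rw [hcomm]
    exact commutatorElement_mem_lowerCentralSeries_succ (inv_mem b.2) _

def commutatorRight (y : G) : γ k →* LowerCentralQuotient G (k + 1) :=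
  MonoidHom.mk'
    (fun v => QuotientGroup.mk ⟨⁅(v : G), y⁆, commutatorElement_mem_lowerCentralSeries_succ v.2 y⟩)
    fun p q => by
      rw [← QuotientGroup.mk_mul, eq_comm, mk_eq_mk_iff]
      have hcomm : (⁅(p : G), y⁆ * ⁅(q : G), y⁆)⁻¹ * ⁅(p * q : G), y⁆ =
          ⁅⁅(q : G), y⁆⁻¹, ⁅(p : G), y⁆⁻¹ * p⁆ := by
        simp only [commutatorElement_def]; group
      simpa only [Subgroup.coe_mul, Subgroup.coe_inv, hcomm] using
        commutatorElement_mem_lowerCentralSeries_succ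
          (inv_mem (commutatorElement_mem_lowerCentralSeries_succ q.2 y)) _

def bracket (y : G) : LowerCentralQuotient G k →* LowerCentralQuotient G (k + 1) :=
  QuotientGroup.lift _ (commutatorRight y) fun _ hv =>
    (QuotientGroup.eq_one_iff _).2 <| Subgroup.mem_subgroupOf.2 <|
      commutatorElement_mem_lowerCentralSeries_succ (Subgroup.mem_subgroupOf.1 hv) y

theorem bracket_mk (y : G) (v : γ k) :
    bracket y (QuotientGroup.mk v : LowerCentralQuotient G k) =
      QuotientGroup.mk ⟨⁅(v : G), y⁆, commutatorElement_mem_lowerCentralSeries_succ v.2 y⟩ :=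
  rfl

theorem bracket_mul (a b : G) (u : LowerCentralQuotient G k) :
    bracket (a * b) u = bracket a u * bracket b u := by
  induction u using QuotientGroup.induction_on with | H v => ?_
  rw [bracket_mk, bracket_mk, bracket_mk, ← QuotientGroup.mk_mul, eq_comm, mk_eq_mk_iff]
  have hcomm : (⁅(v : G), a⁆ * ⁅(v : G), b⁆)⁻¹ * ⁅(v : G), a * b⁆ = ⁅⁅(v : G), b⁆⁻¹, a⁆ := by
    simp only [commutatorElement_def]; group
  simpa only [Subgroup.coe_mul, Subgroup.coe_inv, hcomm] using
    commutatorElement_mem_lowerCentralSeries_succ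
      (inv_mem (commutatorElement_mem_lowerCentralSeries_succ v.2 b)) a

def bracketHom :
    LowerCentralQuotient G k →* Abelianization G →* LowerCentralQuotient G (k + 1) where
  toFun u :=
    Abelianization.lift (MonoidHom.mk' (fun y => bracket y u) fun a b => bracket_mul a b u)
  map_one' := by ext y; exact map_one (bracket y)
  map_mul' u v := by ext y; exact map_mul (bracket y) u v

def ofAbelianization : Abelianization G →* LowerCentralQuotient G 0 :=
  Abelianization.lift ((QuotientGroup.mk' _).comp Subgroup.topEquiv.symm.toMonoidHom)

def commutatorClass (x : Fin (k + 1) → G) : LowerCentralQuotient G k :=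
  QuotientGroup.mk ⟨leftNormalizedCommutator x, leftNormalizedCommutator_mem_lowerCentralSeries x⟩

theorem commutatorClass_succ (x : Fin (k + 2) → G) :
    commutatorClass x = bracket (x (Fin.last _)) (commutatorClass (Fin.init x)) := by
  simp only [commutatorClass, bracket_mk, leftNormalizedCommutator_succ]

variable (G) in
def commutatorMap : (k : ℕ) → (Fin (k + 1) → Abelianization G) → LowerCentralQuotient G k
  | 0, z => ofAbelianization (z 0)
  | k + 1, z => bracketHom (commutatorMap k (Fin.init z)) (z (Fin.last _))

theorem commutatorMap_of (x : Fin (k + 1) → G) :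
    commutatorMap G k (fun i => Abelianization.of (x i)) = commutatorClass x := by
  induction k with
  | zero => rfl
  | succ k ih =>
    rw [commutatorClass_succ, ← ih]
    exact Abelianization.lift_apply_of _ _

theorem commutatorMap_update_mul (z : Fin (k + 1) → Abelianization G) (j : Fin (k + 1))
    (a b : Abelianization G) :
    commutatorMap G k (update z j (a * b)) =
      commutatorMap G k (update z j a) * commutatorMap G k (update z j b) := by
  induction k with
  | zero =>
    obtain rfl := Fin.fin_one_eq_zero j
    simp only [commutatorMap, update_self, map_mul]
  | succ k ih =>
    induction j using Fin.lastCases with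
    | last => simp only [commutatorMap, Fin.init_update_last, update_self, map_mul]
    | cast j =>
      simp only [commutatorMap, Fin.init_update_castSucc, ih, map_mul, MonoidHom.mul_apply,
        update_of_ne (Fin.castSucc_lt_last j).ne']

theorem closure_range_commutatorClass (k : ℕ) :
    Subgroup.closure (Set.range (commutatorClass (G := G) (k := k))) = ⊤ := by
  refine (Subgroup.eq_top_iff' _).2 fun u => ?_
  induction k with
  | zero =>
    induction u using QuotientGroup.induction_on with | H v => ?_
    exact Subgroup.subset_closure ⟨fun _ => v, rfl⟩
  | succ k ih =>
    obtain ⟨⟨g, hg⟩, rfl⟩ := QuotientGroup.mk_surjective u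
    change g ∈ Subgroup.closure _ at hg
    induction hg using Subgroup.closure_induction with
    | mem g hg =>
      obtain ⟨p, hp, y, -, rfl⟩ := hg
      have hmap : (Subgroup.closure (Set.range (commutatorClass (G := G) (k := k)))).map
          (bracket y) ≤ Subgroup.closure (Set.range commutatorClass) := by
        rw [MonoidHom.map_closure, Subgroup.closure_le]
        rintro _ ⟨_, ⟨x, rfl⟩, rfl⟩
        refine Subgroup.subset_closure ⟨Fin.snoc x y, ?_⟩
        simp [commutatorClass_succ]
      exact hmap (Subgroup.mem_map_of_mem (bracket y) (ih (QuotientGroup.mk ⟨p, hp⟩)))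
    | one => exact one_mem _
    | mul a b _ _ ha hb => exact mul_mem ha hb
    | inv a _ ha => exact inv_mem ha

def commutatorMultilinear (k : ℕ) :
    MultilinearMap ℤ (fun _ : Fin (k + 1) => Additive (Abelianization G))
      (Additive (LowerCentralQuotient G k)) :=
  MultilinearMap.ofIntAdditive (fun z => .ofMul (commutatorMap G k (Additive.toMul ∘ z)))
    fun z j a b => by
      simp only [comp_update, toMul_add, commutatorMap_update_mul, ofMul_mul]

def commutatorTensorHom (k : ℕ) :
    (⨂[ℤ] _ : Fin (k + 1), Additive (Abelianization G)) →+ Additive (LowerCentralQuotient G k) :=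
  (PiTensorProduct.lift (commutatorMultilinear k)).toAddMonoidHom

theorem commutatorTensorHom_tprod {k : ℕ} (x : Fin (k + 1) → G) :
    commutatorTensorHom k (PiTensorProduct.tprod ℤ fun i => .ofMul (Abelianization.of (x i))) =
      .ofMul (commutatorClass x) := by
  simp only [commutatorTensorHom, LinearMap.toAddMonoidHom_coe, PiTensorProduct.lift.tprod]
  exact congrArg Additive.ofMul (commutatorMap_of x)

theorem commutatorTensorHom_surjective (k : ℕ) :
    Surjective (commutatorTensorHom (G := G) k) := by
  rw [← AddMonoidHom.range_eq_top, eq_top_iff]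
  have hgen := congrArg Subgroup.toAddSubgroup (closure_range_commutatorClass (G := G) k)
  rw [Subgroup.toAddSubgroup_closure, map_top] at hgen
  rw [← hgen, AddSubgroup.closure_le]
  rintro _ ⟨x, rfl⟩
  exact ⟨_, commutatorTensorHom_tprod x⟩

end LowerCentralQuotient

/-- For the free group `F` of rank `n`, with `A = F/[F,F]`, there is for each
`k ≥ 1` (here `k+1`) a surjective homomorphism from the `(k+1)`-fold tensor power of `A`
over `ℤ` onto `γ_{k+1}(F)/γ_{k+2}(F)` sending `x̄_1 ⊗ ⋯ ⊗ x̄_{k+1}` to the class of the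
left-normalized commutator `[x_1, …, x_{k+1}]`. -/
theorem stmt2 (n : ℕ) (k : ℕ) :
    ∃ φ : (⨂[ℤ] _ : Fin (k + 1), Additive (Abelianization (FreeGroup (Fin n)))) →+
        Additive (↥(Subgroup.lowerCentralSeries (⊤ : Subgroup (FreeGroup (Fin n))) k) ⧸
          (Subgroup.lowerCentralSeries (⊤ : Subgroup (FreeGroup (Fin n))) (k + 1)).subgroupOf
            (Subgroup.lowerCentralSeries (⊤ : Subgroup (FreeGroup (Fin n))) k)),
      Function.Surjective φ ∧
        ∀ (x : Fin (k + 1) → FreeGroup (Fin n))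
          (h : leftNormalizedCommutator x ∈ Subgroup.lowerCentralSeries (⊤ : Subgroup (FreeGroup (Fin n))) k),
          φ (PiTensorProduct.tprod ℤ
              (fun i => Additive.ofMul (Abelianization.of (x i)))) =
            Additive.ofMul (QuotientGroup.mk (⟨leftNormalizedCommutator x, h⟩ :
              ↥(Subgroup.lowerCentralSeries (⊤ : Subgroup (FreeGroup (Fin n))) k))) :=
  ⟨LowerCentralQuotient.commutatorTensorHom k,
    LowerCentralQuotient.commutatorTensorHom_surjective k,
    fun x _ => LowerCentralQuotient.commutatorTensorHom_tprod x⟩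
end

section
/- The group G(K₁) = ⟨x, y | x = x^{y x y⁻² x y}⟩ is isomorphic to a semidirect product F₃ ⋊ ℤ, where F₃ is the free group of rank 3 with basis y₀, y₁, y₂, and the generator of ℤ acts by the automorphism y₀ ↦ y₁, y₁ ↦ y₂, y₂ ↦ y₂y₁⁻²y₀y₁⁻¹y₂². -/
private abbrev x : FreeGroup (Fin 2) := FreeGroup.of 0
private abbrev y : FreeGroup (Fin 2) := FreeGroup.of 1

/-- `G(K₁) = ⟨x, y ∣ x = x^{y x y⁻² x y}⟩`. -/
def GK1 : Type :=
  PresentedGroup ({x⁻¹ * (y * x * y⁻¹ * y⁻¹ * x * y)⁻¹ * x * (y * x * y⁻¹ * y⁻¹ * x * y)} :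
    Set (FreeGroup (Fin 2)))

instance : Group GK1 := by unfold GK1; infer_instance

private abbrev y₀ : FreeGroup (Fin 3) := FreeGroup.of 0
private abbrev y₁ : FreeGroup (Fin 3) := FreeGroup.of 1
private abbrev y₂ : FreeGroup (Fin 3) := FreeGroup.of 2

/-!
Writing `yₖ = x⁻ᵏ y xᵏ` and `w = y x y⁻² x y`, one has `w = y₀ y₋₁⁻² y₋₂ x²`, so the relation
`x⁻¹ w x = w` says `y₃ = y₂ y₁⁻² y₀ y₁⁻¹ y₂²`: conjugation by `x⁻¹` acts on `y₀, y₁, y₂` as the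
automorphism `shift`, and `yₖ ↦ yₖ`, `t ↦ x⁻¹` (with `t` the generator of `ℤ`) defines
`F₃ ⋊ ℤ → G(K₁)`. Conversely `x ↦ t⁻¹`, `y ↦ y₀` respects the relation because `w` maps to
`t⁻² · y₂ y₁⁻² y₀` and `y₂ y₁⁻² y₀` is fixed by `shift`. Both composites are the identity on
generators.
-/

theorem inv_mul_inv_mul_mul_eq_one_iff_commute {G : Type*} [Group G] {a b : G} :
    a⁻¹ * b⁻¹ * a * b = 1 ↔ Commute a b := by
  rw [← Commute.inv_inv_iff, ← commutatorElement_eq_one_iff_commute, commutatorElement_def,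
    inv_inv, inv_inv]

theorem MonoidHom.map_zpow_apply_eq_conj {N G : Type*} [Group N] [Group G] (f : N →* G)
    {σ : MulAut N} {g : G} (h : ∀ n, f (σ n) = g * f n * g⁻¹) (k : ℤ) (n : N) :
    f ((σ ^ k) n) = g ^ k * f n * (g ^ k)⁻¹ := by
  induction k using Int.induction_on generalizing n with
  | zero => simp
  | succ i ih => rw [zpow_add_one, MulAut.mul_apply, ih, h, zpow_add_one]; group
  | pred i ih =>
    have h_inv : f (σ⁻¹ n) = g⁻¹ * f n * g := by
      have h_at := h (σ⁻¹ n)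
      rw [MulAut.apply_inv_self] at h_at
      rw [h_at]; group
    rw [zpow_sub_one, MulAut.mul_apply, ih, h_inv, zpow_sub_one]; group

theorem SemidirectProduct.inl_mul_inr {N G : Type*} [Group N] [Group G] {φ : G →* MulAut N}
    (n : N) (g : G) : (inl n : N ⋊[φ] G) * inr g = inr g * inl (φ g⁻¹ n) := by
  rw [inl_aut, inv_inv, map_inv]; group

local notation "F₃" => FreeGroup (Fin 3)

namespace GK1

open SemidirectProduct

def shiftHom : F₃ →* F₃ :=
  FreeGroup.lift ![y₁, y₂, y₂ * y₁⁻¹ * y₁⁻¹ * y₀ * y₁⁻¹ * y₂ * y₂]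

def shiftInvHom : F₃ →* F₃ :=
  FreeGroup.lift ![y₀ * y₀ * y₁⁻¹ * y₂ * y₁⁻¹ * y₁⁻¹ * y₀, y₀, y₁]

def shift : MulAut F₃ :=
  shiftHom.toMulEquiv shiftInvHom
    (by ext i; fin_cases i <;> simp [shiftHom, shiftInvHom]; group)
    (by ext i; fin_cases i <;> simp [shiftHom, shiftInvHom]; group)

@[simp] theorem shift_apply (n : F₃) : shift n = shiftHom n := rfl

theorem shift_symm_apply (n : F₃) : shift.symm n = shiftInvHom n := rfl

theorem shift_fixes : shift (y₂ * y₁⁻¹ * y₁⁻¹ * y₀) = y₂ * y₁⁻¹ * y₁⁻¹ * y₀ := by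
  simp [shiftHom]

def action : Multiplicative ℤ →* MulAut F₃ := zpowersHom _ shift

theorem action_ofAdd_one : action (.ofAdd 1) = shift := by simp [action]

def X : GK1 := PresentedGroup.of 0

def Y : GK1 := PresentedGroup.of 1

theorem commute_X_conjugator : Commute X (Y * X * Y⁻¹ * Y⁻¹ * X * Y) :=
  inv_mul_inv_mul_mul_eq_one_iff_commute.mp (PresentedGroup.one_of_mem rfl)

def ofFree : F₃ →* GK1 := FreeGroup.lift ![Y, X⁻¹ * Y * X, X⁻¹ * X⁻¹ * Y * X * X]

theorem ofFree_shift (n : F₃) : ofFree (shift n) = X⁻¹ * ofFree n * X := by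
  suffices ofFree.comp shiftHom = (MulAut.conj X⁻¹).toMonoidHom.comp ofFree by
    simpa using DFunLike.congr_fun this n
  ext i
  fin_cases i
  · simp [ofFree, shiftHom]
  · simp [ofFree, shiftHom]
    group
  · simp [ofFree, shiftHom]
    have hW : X⁻¹ * (Y * X * Y⁻¹ * Y⁻¹ * X * Y) * X = Y * X * Y⁻¹ * Y⁻¹ * X * Y := by
      rw [mul_assoc, ← commute_X_conjugator.eq, inv_mul_cancel_left]
    calc _ = X⁻¹ * X⁻¹ * (Y * X * Y⁻¹ * Y⁻¹ * X * Y) *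
          (X⁻¹ * Y⁻¹ * X * (X⁻¹ * X⁻¹ * Y * Y * X * X)) := by group
      _ = X⁻¹ * X⁻¹ * (X⁻¹ * (Y * X * Y⁻¹ * Y⁻¹ * X * Y) * X) *
          (X⁻¹ * Y⁻¹ * X * (X⁻¹ * X⁻¹ * Y * Y * X * X)) := by rw [hW]
      _ = _ := by group

theorem conjugator_image_eq :
    (inl y₀ * inr (.ofAdd (-1)) * (inl y₀)⁻¹ * (inl y₀)⁻¹ * inr (.ofAdd (-1)) * inl y₀ :
      F₃ ⋊[action] Multiplicative ℤ) = inr (.ofAdd (-2)) * inl (y₂ * y₁⁻¹ * y₁⁻¹ * y₀) := by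
  ext
  · simp only [mul_left, inv_left, left_inl, right_inl, left_inr, right_inr, mul_right, inv_right]
    simp [action, shiftInvHom, shift_symm_apply, pow_two]
  · rfl

theorem commute_inr_inl_of_shift_eq {u : F₃} (hu : shift u = u) :
    Commute (inr (.ofAdd (-1)) : F₃ ⋊[action] Multiplicative ℤ) (inl u) := by
  rw [Commute, SemiconjBy, inl_mul_inr, ofAdd_neg, inv_inv, action_ofAdd_one, hu]

def toSemidirect : GK1 →* F₃ ⋊[action] Multiplicative ℤ :=
  PresentedGroup.toGroup (f := ![inr (.ofAdd (-1)), inl y₀]) <| by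
    rintro _ rfl
    simp only [map_mul, map_inv, FreeGroup.lift_apply_of, Matrix.cons_val_zero,
      Matrix.cons_val_one]
    rw [inv_mul_inv_mul_mul_eq_one_iff_commute, conjugator_image_eq]
    exact ((Commute.all _ _).map inr).mul_right (commute_inr_inl_of_shift_eq shift_fixes)

theorem toSemidirect_X : toSemidirect X = inr (.ofAdd (-1)) := PresentedGroup.toGroup.of _

theorem toSemidirect_Y : toSemidirect Y = inl y₀ := PresentedGroup.toGroup.of _

def ofSemidirect : F₃ ⋊[action] Multiplicative ℤ →* GK1 :=
  SemidirectProduct.lift ofFree (zpowersHom GK1 X⁻¹) fun _ => by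
    ext n
    exact ofFree.map_zpow_apply_eq_conj (fun m => by rw [inv_inv, ofFree_shift]) _ _

theorem ofSemidirect_comp_toSemidirect : ofSemidirect.comp toSemidirect = .id GK1 := by
  refine PresentedGroup.ext fun i => ?_
  fin_cases i
  · change ofSemidirect (toSemidirect X) = X
    simp [toSemidirect_X, ofSemidirect]
  · change ofSemidirect (toSemidirect Y) = Y
    simp [toSemidirect_Y, ofSemidirect, ofFree]

theorem toSemidirect_ofFree (n : F₃) : toSemidirect (ofFree n) = inl n := by
  have step (m : F₃) (hm : toSemidirect (ofFree m) = inl m) :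
      toSemidirect (ofFree (shift m)) = inl (shift m) := by
    rw [ofFree_shift, ← action_ofAdd_one, inl_aut]
    simp only [map_mul, map_inv, hm, toSemidirect_X, ofAdd_neg, inv_inv]
  have h₀ : toSemidirect (ofFree y₀) = inl y₀ := toSemidirect_Y
  have h₁ : toSemidirect (ofFree y₁) = inl y₁ := by simpa [shiftHom] using step _ h₀
  have h₂ : toSemidirect (ofFree y₂) = inl y₂ := by simpa [shiftHom] using step _ h₁
  suffices toSemidirect.comp ofFree = inl from DFunLike.congr_fun this n
  refine FreeGroup.ext_hom _ _ fun i => ?_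
  fin_cases i
  exacts [h₀, h₁, h₂]

theorem toSemidirect_comp_ofSemidirect :
    toSemidirect.comp ofSemidirect = .id (F₃ ⋊[action] Multiplicative ℤ) := by
  refine SemidirectProduct.hom_ext (FreeGroup.ext_hom _ _ fun i => ?_) (MonoidHom.ext_mint ?_)
  · simp [ofSemidirect, toSemidirect_ofFree]
  · simp [ofSemidirect, toSemidirect_X]

def mulEquivSemidirect : GK1 ≃* F₃ ⋊[action] Multiplicative ℤ :=
  toSemidirect.toMulEquiv ofSemidirect ofSemidirect_comp_toSemidirect
    toSemidirect_comp_ofSemidirect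

end GK1

/-- `G(K₁) ≅ F₃ ⋊ ℤ`, where the generator of `ℤ` acts on the free group `F₃` on
`y₀, y₁, y₂` by `y₀ ↦ y₁`, `y₁ ↦ y₂`, `y₂ ↦ y₂ y₁⁻² y₀ y₁⁻¹ y₂²`. -/
theorem stmt6 :
    ∃ φ : Multiplicative ℤ →* MulAut (FreeGroup (Fin 3)),
      φ (Multiplicative.ofAdd 1) y₀ = y₁ ∧
      φ (Multiplicative.ofAdd 1) y₁ = y₂ ∧
      φ (Multiplicative.ofAdd 1) y₂ = y₂ * y₁⁻¹ * y₁⁻¹ * y₀ * y₁⁻¹ * y₂ * y₂ ∧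
      Nonempty (GK1 ≃* (FreeGroup (Fin 3) ⋊[φ] Multiplicative ℤ)) := by
  refine ⟨GK1.action, ?_, ?_, ?_, ⟨GK1.mulEquivSemidirect⟩⟩ <;>
    simp [GK1.action_ofAdd_one, GK1.shiftHom]
end

section
/- The group G(K₂) = ⟨x, y | [x^{y⁻¹xy⁻¹} x^{yx⁻¹y}, x] = 1⟩ is isomorphic to a semidirect product F₅ ⋊ ℤ, where F₅ is the free group of rank 5 on y₀,...,y₄ and the generator x of ℤ acts by yᵢ ↦ y_{i+1} for 0 ≤ i ≤ 3 and y₄ ↦ y₄⁻¹y₃y₄y₃⁻¹y₂⁻²y₁⁻¹y₀y₁y₂⁻¹y₁⁻¹y₂y₃²y₄. -/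
open scoped commutatorElement

/-- `G(K₂) = ⟨x, y ∣ [x^{y⁻¹xy⁻¹} x^{yx⁻¹y}, x] = 1⟩`, the group of the virtual knot 4.21. -/
def GK2 : Type :=
  PresentedGroup
    ({⁅(y⁻¹ * x * y⁻¹)⁻¹ * x * (y⁻¹ * x * y⁻¹) * ((y * x⁻¹ * y)⁻¹ * x * (y * x⁻¹ * y)), x⁆} :
      Set (FreeGroup (Fin 2)))

instance : Group GK2 := by unfold GK2; infer_instance

private abbrev z (i : Fin 5) : FreeGroup (Fin 5) := FreeGroup.of i

/-!
With `y_k = x⁻ᵏyxᵏ` and `c = x^{y⁻¹xy⁻¹} x^{yx⁻¹y}`, both `y₅` and the recurrence word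
`w(y₀, …, y₄)` have the form `y₄⁻¹ · u · b`, with `u = c^{x⁴}` and `u = c^{x³}` respectively.
So the relator `[c, x]` is trivial iff `y₅ = w(y₀, …, y₄)`. Since `w` involves `y₀` exactly once,
`yᵢ ↦ yᵢ₊₁, y₄ ↦ w` is an automorphism of `F₅`, and `x ↦ t⁻¹, y ↦ y₀` and `yₖ ↦ x⁻ᵏyxᵏ, t ↦ x⁻¹`
are mutually inverse homomorphisms between `G(K₂)` and `F₅ ⋊ ⟨t⟩`.
-/

open SemidirectProduct Multiplicative

section Words

variable {G H : Type*} [Group G] [Group H]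

def conjSeq (X Y : G) (k : ℕ) : G := (X ^ k)⁻¹ * Y * X ^ k

lemma conjSeq_succ (X Y : G) (k : ℕ) : conjSeq X Y (k + 1) = X⁻¹ * conjSeq X Y k * X := by
  simp only [conjSeq, pow_succ]; group

lemma map_conjSeq (f : G →* H) (X Y : G) (k : ℕ) :
    f (conjSeq X Y k) = conjSeq (f X) (f Y) k := by
  simp only [conjSeq, map_mul, map_inv, map_pow]

def recurrenceWord (a : Fin 5 → G) : G :=
  (a 4)⁻¹ * a 3 * a 4 * (a 3)⁻¹ * (a 2)⁻¹ * (a 2)⁻¹ * (a 1)⁻¹ * a 0 * a 1 *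
    (a 2)⁻¹ * (a 1)⁻¹ * a 2 * a 3 * a 3 * a 4

lemma map_recurrenceWord (f : G →* H) (a : Fin 5 → G) :
    f (recurrenceWord a) = recurrenceWord (fun i => f (a i)) := by
  simp only [recurrenceWord, map_mul, map_inv]

def relator (X Y : G) : G :=
  ⁅((Y⁻¹ * X * Y⁻¹)⁻¹ * X * (Y⁻¹ * X * Y⁻¹) * ((Y * X⁻¹ * Y)⁻¹ * X * (Y * X⁻¹ * Y)) : G), X⁆

lemma map_relator (f : G →* H) (X Y : G) : f (relator X Y) = relator (f X) (f Y) := by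
  simp only [relator, commutatorElement_def, map_mul, map_inv]

lemma relator_eq_one_iff (X Y : G) :
    relator X Y = 1 ↔ conjSeq X Y 5 = recurrenceWord (fun i => conjSeq X Y i) := by
  set c := (Y⁻¹ * X * Y⁻¹)⁻¹ * X * (Y⁻¹ * X * Y⁻¹) * ((Y * X⁻¹ * Y)⁻¹ * X * (Y * X⁻¹ * Y))
  set b := (X ^ 2)⁻¹ * (conjSeq X Y 2)⁻¹ * (conjSeq X Y 1)⁻¹ * conjSeq X Y 2 * conjSeq X Y 3 *
    conjSeq X Y 3 * conjSeq X Y 4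
  have h₅ : conjSeq X Y 5 = (conjSeq X Y 4)⁻¹ * MulAut.conj (X ^ 4)⁻¹ c * b := by
    simp only [b, c, conjSeq, MulAut.conj_apply]; group
  have hw : recurrenceWord (fun i => conjSeq X Y i) =
      (conjSeq X Y 4)⁻¹ * MulAut.conj (X ^ 3)⁻¹ c * b := by
    simp only [b, c, recurrenceWord, conjSeq, MulAut.conj_apply, Fin.isValue, Fin.coe_ofNat_eq_mod,
      Nat.reduceMod]
    group
  have h₄ : MulAut.conj (X ^ 4)⁻¹ c = MulAut.conj (X ^ 3)⁻¹ (X⁻¹ * c * X) := by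
    simp only [MulAut.conj_apply]; group
  rw [h₅, hw, mul_left_inj, mul_right_inj, h₄, (MulAut.conj _).injective.eq_iff,
    show relator X Y = ⁅c, X⁆ from rfl, commutatorElement_eq_one_iff_mul_comm, mul_assoc X⁻¹,
    inv_mul_eq_iff_eq_mul]

end Words

lemma MonoidHom.comp_zpow_eq_conj_zpow_comp {N G : Type*} [Group N] [Group G] (f : N →* G)
    (α : MulAut N) (g : G) (h : ∀ v, f (α v) = MulAut.conj g (f v)) (n : ℤ) :
    f.comp (α ^ n).toMonoidHom = (MulAut.conj (g ^ n)).toMonoidHom.comp f := by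
  ext v
  simp only [MonoidHom.comp_apply, MulEquiv.coe_toMonoidHom]
  induction n using Int.induction_on generalizing v with
  | zero => simp
  | succ n ih =>
    rw [zpow_add_one, MulAut.mul_apply, ih, h, zpow_add_one, map_mul, MulAut.mul_apply]
  | pred n ih =>
    have h' : f (α⁻¹ v) = (MulAut.conj g)⁻¹ (f v) :=
      (MulAut.conj g).injective (by rw [← h, MulAut.apply_inv_self, MulAut.apply_inv_self])
    rw [zpow_sub_one, MulAut.mul_apply, ih, h', zpow_sub_one, map_mul, MulAut.mul_apply, map_inv]

def shiftHom : FreeGroup (Fin 5) →* FreeGroup (Fin 5) :=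
  FreeGroup.lift ![z 1, z 2, z 3, z 4, recurrenceWord z]

/-- The image of `y₀` is `y₋₁`, the recurrence `y₄ = recurrenceWord (y₋₁, y₀, …, y₃)` solved
for `y₋₁`. -/
def unshiftHom : FreeGroup (Fin 5) →* FreeGroup (Fin 5) :=
  FreeGroup.lift ![z 0 * z 1 * z 1 * z 2 * (z 3)⁻¹ * (z 2)⁻¹ * z 3 * z 4 * (z 3)⁻¹ * (z 2)⁻¹ *
    (z 2)⁻¹ * (z 1)⁻¹ * z 0 * z 1 * (z 0)⁻¹, z 0, z 1, z 2, z 3]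

def shift : MulAut (FreeGroup (Fin 5)) :=
  MonoidHom.toMulEquiv shiftHom unshiftHom
    (FreeGroup.ext_hom _ _ fun i => by
      fin_cases i <;> simp only [shiftHom, unshiftHom, recurrenceWord, MonoidHom.comp_apply,
        MonoidHom.id_apply, map_mul, map_inv, FreeGroup.lift_apply_of, Matrix.cons_val,
        Matrix.cons_val_zero, Matrix.cons_val_one, Fin.isValue, Fin.zero_eta, Fin.mk_one,
        Fin.reduceFinMk]
      group)
    (FreeGroup.ext_hom _ _ fun i => by
      fin_cases i <;> simp only [shiftHom, unshiftHom, recurrenceWord, MonoidHom.comp_apply,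
        MonoidHom.id_apply, map_mul, map_inv, FreeGroup.lift_apply_of, Matrix.cons_val,
        Matrix.cons_val_zero, Matrix.cons_val_one, Fin.isValue, Fin.zero_eta, Fin.mk_one,
        Fin.reduceFinMk]
      group)

lemma shift_apply (v : FreeGroup (Fin 5)) : shift v = shiftHom v := rfl

lemma shift_of_castSucc (i : Fin 4) : shift (z i.castSucc) = z i.succ := by
  fin_cases i <;> simp [shift_apply, shiftHom]

lemma shift_of_last : shift (z 4) = recurrenceWord z := by
  simp [shift_apply, shiftHom]

def shiftAction : Multiplicative ℤ →* MulAut (FreeGroup (Fin 5)) := zpowersHom _ shift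

lemma shiftAction_ofAdd_one : shiftAction (ofAdd 1) = shift := pow_one shift

abbrev ShiftSemidirect := FreeGroup (Fin 5) ⋊[shiftAction] Multiplicative ℤ

lemma inl_shift (n : FreeGroup (Fin 5)) :
    (inl (shift n) : ShiftSemidirect) = inr (ofAdd 1) * inl n * (inr (ofAdd 1))⁻¹ := by
  rw [← shiftAction_ofAdd_one, inl_aut, map_inv]

lemma conjSeq_inr_inl (i : Fin 5) :
    conjSeq (inr (ofAdd 1) : ShiftSemidirect)⁻¹ (inl (z 0)) i = inl (z i) := by
  induction i using Fin.induction with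
  | zero => rfl
  | succ i ih =>
    rw [Fin.val_succ, conjSeq_succ, ← Fin.val_castSucc, ih, inv_inv, ← inl_shift,
      shift_of_castSucc]

lemma relator_inr_inl : relator (inr (ofAdd 1) : ShiftSemidirect)⁻¹ (inl (z 0)) = 1 := by
  have h₄ : conjSeq (inr (ofAdd 1) : ShiftSemidirect)⁻¹ (inl (z 0)) 4 = inl (z 4) :=
    conjSeq_inr_inl 4
  rw [relator_eq_one_iff, conjSeq_succ, h₄, inv_inv, ← inl_shift, shift_of_last,
    map_recurrenceWord]
  simp only [conjSeq_inr_inl]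

namespace GK2

def genX : GK2 := PresentedGroup.of 0

def genY : GK2 := PresentedGroup.of 1

lemma relator_genX_genY : relator genX genY = 1 :=
  (map_relator (PresentedGroup.mk _) x y).symm.trans (PresentedGroup.one_of_mem rfl)

def toSemidirect : GK2 →* ShiftSemidirect :=
  PresentedGroup.toGroup (f := ![(inr (ofAdd 1))⁻¹, inl (z 0)]) <| by
    rintro r rfl
    change FreeGroup.lift _ (relator x y) = 1
    rw [map_relator, FreeGroup.lift_apply_of, FreeGroup.lift_apply_of]
    exact relator_inr_inl

lemma toSemidirect_genX : toSemidirect genX = (inr (ofAdd 1))⁻¹ := PresentedGroup.toGroup.of _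

lemma toSemidirect_genY : toSemidirect genY = inl (z 0) := PresentedGroup.toGroup.of _

def liftConjSeq : FreeGroup (Fin 5) →* GK2 := FreeGroup.lift fun i : Fin 5 => conjSeq genX genY i

lemma liftConjSeq_shift_of (i : Fin 5) :
    liftConjSeq (shift (z i)) = conjSeq genX genY (i + 1) := by
  induction i using Fin.lastCases with
  | last =>
    change liftConjSeq (shift (z 4)) = conjSeq genX genY (4 + 1)
    rw [shift_of_last, map_recurrenceWord]
    simp only [liftConjSeq, FreeGroup.lift_apply_of]
    exact ((relator_eq_one_iff _ _).1 relator_genX_genY).symm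
  | cast j =>
    rw [shift_of_castSucc, liftConjSeq, FreeGroup.lift_apply_of, Fin.val_succ, Fin.val_castSucc]

lemma liftConjSeq_shift (v : FreeGroup (Fin 5)) :
    liftConjSeq (shift v) = MulAut.conj genX⁻¹ (liftConjSeq v) := by
  refine DFunLike.congr_fun (FreeGroup.ext_hom (liftConjSeq.comp shift.toMonoidHom)
    ((MulAut.conj genX⁻¹).toMonoidHom.comp liftConjSeq) fun i => ?_) v
  change liftConjSeq (shift (z i)) = MulAut.conj genX⁻¹ (liftConjSeq (z i))
  rw [liftConjSeq_shift_of, conjSeq_succ, liftConjSeq, FreeGroup.lift_apply_of, MulAut.conj_apply,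
    inv_inv]

def ofSemidirect : ShiftSemidirect →* GK2 :=
  SemidirectProduct.lift liftConjSeq (zpowersHom _ genX⁻¹)
    fun g => MonoidHom.comp_zpow_eq_conj_zpow_comp _ shift genX⁻¹ liftConjSeq_shift g.toAdd

lemma ofSemidirect_inl (n : FreeGroup (Fin 5)) : ofSemidirect (inl n) = liftConjSeq n :=
  lift_inl _ _ _ n

lemma ofSemidirect_inr (g : Multiplicative ℤ) : ofSemidirect (inr g) = genX⁻¹ ^ g.toAdd :=
  lift_inr _ _ _ g

def equivSemidirect : GK2 ≃* ShiftSemidirect :=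
  MonoidHom.toMulEquiv toSemidirect ofSemidirect
    (PresentedGroup.ext fun i => by
      fin_cases i
      · change ofSemidirect (toSemidirect genX) = genX
        rw [toSemidirect_genX, ← map_inv, ofSemidirect_inr]
        simp
      · change ofSemidirect (toSemidirect genY) = genY
        rw [toSemidirect_genY, ofSemidirect_inl, liftConjSeq, FreeGroup.lift_apply_of]
        rfl)
    (SemidirectProduct.hom_ext
      (FreeGroup.ext_hom _ _ fun i => by
        change toSemidirect (ofSemidirect (inl (z i))) = inl (z i)
        rw [ofSemidirect_inl, liftConjSeq, FreeGroup.lift_apply_of, map_conjSeq, toSemidirect_genX,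
          toSemidirect_genY, conjSeq_inr_inl])
      (MonoidHom.ext_mint (by
        change toSemidirect (ofSemidirect (inr (ofAdd 1))) = inr (ofAdd 1)
        rw [ofSemidirect_inr, toAdd_ofAdd, zpow_one, map_inv, toSemidirect_genX, inv_inv])))

end GK2

/-- `G(K₂) ≅ F₅ ⋊ ℤ`, where the generator of `ℤ` acts on the free group `F₅` on
`y₀, …, y₄` by `yᵢ ↦ y_{i+1}` for `0 ≤ i ≤ 3` and
`y₄ ↦ y₄⁻¹y₃y₄y₃⁻¹y₂⁻²y₁⁻¹y₀y₁y₂⁻¹y₁⁻¹y₂y₃²y₄`. -/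
theorem stmt8 :
    ∃ φ : Multiplicative ℤ →* MulAut (FreeGroup (Fin 5)),
      (∀ i : Fin 4, φ (Multiplicative.ofAdd 1) (z i.castSucc) = z i.succ) ∧
      φ (Multiplicative.ofAdd 1) (z 4) =
        (z 4)⁻¹ * z 3 * z 4 * (z 3)⁻¹ * (z 2)⁻¹ * (z 2)⁻¹ * (z 1)⁻¹ * z 0 * z 1 *
          (z 2)⁻¹ * (z 1)⁻¹ * z 2 * z 3 * z 3 * z 4 ∧
      Nonempty (GK2 ≃* (FreeGroup (Fin 5) ⋊[φ] Multiplicative ℤ)) :=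
  ⟨shiftAction, fun i => by rw [shiftAction_ofAdd_one, shift_of_castSucc],
    by rw [shiftAction_ofAdd_one, shift_of_last]; rfl, ⟨GK2.equivSemidirect⟩⟩
end

section
/- Let α be the endomorphism of A = ℤ⁵ with basis e₀,...,e₄ given by eᵢ ↦ e_{i+1} for 0 ≤ i ≤ 3 and e₄ ↦ e₀ − e₁ − 2e₂ + 2e₃ + e₄. Let v₁ = e₀+2e₁+e₂, v₂ = −e₀−e₁+e₂+e₃, v₃ = e₀−2e₂+e₄, w₁ = −e₀+3e₁−3e₂+e₃, w₂ = −e₀+2e₁−2e₃+e₄. Then ker(α−id)³ is the subgroup generated by v₁,v₂,v₃ and ker(α+id)² is the subgroup generated by w₁,w₂; moreover α(v₁)=v₁+v₂, α(v₂)=v₂+v₃, α(v₃)=v₃, α(w₁)=−w₁+w₂, α(w₂)=−w₂. -/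
/-!
Under the standard identification, `α` is multiplication by the companion matrix `C` of
`X⁵ - X⁴ - 2X³ + 2X² + X - 1 = (X - 1)³(X + 1)²`. An integral identity `ker A = span (columns of V)`
is certified by integer matrices `L`, `K` with `A V = 0` and `V L + K A = 1`: then every `x` with
`A x = 0` equals `V (L x)`. For `A = (C - 1)³` and `A = (C + 1)²` such certificates exist with
`L` reading off coordinates, and everything left is a finite integer matrix computation.
-/

private abbrev v₁ : Fin 5 → ℤ := ![1, 2, 1, 0, 0]
private abbrev v₂ : Fin 5 → ℤ := ![-1, -1, 1, 1, 0]
private abbrev v₃ : Fin 5 → ℤ := ![1, 0, -2, 0, 1]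
private abbrev w₁ : Fin 5 → ℤ := ![-1, 3, -3, 1, 0]
private abbrev w₂ : Fin 5 → ℤ := ![-1, 2, 0, -2, 1]

open Matrix

theorem Matrix.ker_mulVecLin_eq_span_col_of_mul_add_mul_eq_one {R m n k : Type*}
    [CommSemiring R] [Fintype m] [Fintype n] [Fintype k] [DecidableEq n]
    {A : Matrix m n R} {V : Matrix n k R} (L : Matrix k n R) (K : Matrix n m R)
    (hAV : A * V = 0) (hVLKA : V * L + K * A = 1) :
    LinearMap.ker A.mulVecLin = Submodule.span R (Set.range V.col) := by
  rw [← range_mulVecLin]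
  apply le_antisymm
  · intro x (hx : A *ᵥ x = 0)
    refine ⟨L *ᵥ x, ?_⟩
    calc V *ᵥ (L *ᵥ x) = V *ᵥ (L *ᵥ x) + K *ᵥ (A *ᵥ x) := by rw [hx, mulVec_zero, add_zero]
      _ = x := by rw [mulVec_mulVec, mulVec_mulVec, ← add_mulVec, hVLKA, one_mulVec]
  · rw [LinearMap.range_le_ker_iff, ← mulVecLin_mul, hAV, mulVecLin_zero]

def alphaMatrix : Matrix (Fin 5) (Fin 5) ℤ :=
  !![0, 0, 0, 0, 1; 1, 0, 0, 0, -1; 0, 1, 0, 0, -2; 0, 0, 1, 0, 2; 0, 0, 0, 1, 1]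

theorem eq_toLinAlgEquiv'_alphaMatrix (α : Module.End ℤ (Fin 5 → ℤ))
    (hα : ∀ i : Fin 4, α (Pi.single i.castSucc 1) = Pi.single i.succ 1)
    (hα4 : α (Pi.single 4 1) = ![1, -1, -2, 2, 1]) :
    α = toLinAlgEquiv' alphaMatrix := by
  refine (Pi.basisFun ℤ (Fin 5)).ext fun j => ?_
  rw [Pi.basisFun_apply, toLinAlgEquiv'_apply, mulVec_single_one]
  induction j using Fin.lastCases with
  | last => exact hα4.trans (by decide)
  | cast i => rw [hα i]; revert i; decide

/-- For the endomorphism `α` of `ℤ⁵` with `eᵢ ↦ e_{i+1}` (`0 ≤ i ≤ 3`) and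
`e₄ ↦ e₀ − e₁ − 2e₂ + 2e₃ + e₄`: `ker(α−id)³ = ⟨v₁,v₂,v₃⟩`, `ker(α+id)² = ⟨w₁,w₂⟩`, and
`α(v₁)=v₁+v₂`, `α(v₂)=v₂+v₃`, `α(v₃)=v₃`, `α(w₁)=−w₁+w₂`, `α(w₂)=−w₂`. -/
theorem stmt10 (α : Module.End ℤ (Fin 5 → ℤ))
    (hα : ∀ i : Fin 4, α (Pi.single i.castSucc 1) = Pi.single i.succ 1)
    (hα4 : α (Pi.single 4 1) = ![1, -1, -2, 2, 1]) :
    LinearMap.ker ((α - 1) ^ 3) = Submodule.span ℤ {v₁, v₂, v₃} ∧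
    LinearMap.ker ((α + 1) ^ 2) = Submodule.span ℤ {w₁, w₂} ∧
    α v₁ = v₁ + v₂ ∧ α v₂ = v₂ + v₃ ∧ α v₃ = v₃ ∧
    α w₁ = -w₁ + w₂ ∧ α w₂ = -w₂ := by
  obtain rfl := eq_toLinAlgEquiv'_alphaMatrix α hα hα4
  simp only [← map_one (toLinAlgEquiv' (R := ℤ) (n := Fin 5)), ← map_sub, ← map_add, ← map_pow,
    toLinAlgEquiv'_apply]
  refine ⟨(ker_mulVecLin_eq_span_col_of_mul_add_mul_eq_one (V := (of ![v₁, v₂, v₃])ᵀ)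
      !![0, 0, 1, -1, 2; 0, 0, 0, 1, 0; 0, 0, 0, 0, 1]
      !![-1, 0, 0, 0, 0; 0, 0, 0, 0, 1; 0, 0, 0, 0, 0; 0, 0, 0, 0, 0; 0, 0, 0, 0, 0]
      (by decide) (by decide)).trans ?_,
    (ker_mulVecLin_eq_span_col_of_mul_add_mul_eq_one (V := (of ![w₁, w₂])ᵀ)
      !![0, 0, 0, 1, 2; 0, 0, 0, 0, 1]
      !![1, 0, 0, 0, 0; -2, 1, 0, 0, 0; 0, 0, 0, 0, 1; 0, 0, 0, 0, 0; 0, 0, 0, 0, 0]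
      (by decide) (by decide)).trans ?_,
    by decide, by decide, by decide, by decide, by decide⟩
  · rw [col_transpose, row_eq_self, Equiv.symm_apply_apply, range_cons, range_cons_cons_empty,
      Set.singleton_union]
  · rw [col_transpose, row_eq_self, Equiv.symm_apply_apply, range_cons_cons_empty]
end

section
/- With α and A = ℤ⁵ as above, let A₀ = V + W where V = ⟨v₁,v₂,v₃⟩ and W = ⟨w₁,w₂⟩. Then the quotient A/A₀ is isomorphic to ℤ/4 ⊕ ℤ/16, generated by the images of t₀ = e₀ + 3e₁ and t₁ = e₁ respectively. -/
/-- The subgroup `A₀ = V + W` of `ℤ⁵` generated by `v₁, v₂, v₃, w₁, w₂`. -/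
def A₀ : Submodule ℤ (Fin 5 → ℤ) := Submodule.span ℤ {v₁, v₂, v₃, w₁, w₂}

/-!
The map `x ↦ (x₀ + 3x₂ + 2x₃ + x₄ mod 4, 13x₀ + x₁ + x₂ + 13x₃ + 5x₄ mod 16)` from `ℤ⁵` to
`ℤ/4 × ℤ/16` kills the five generators, sends `t₀ ↦ (1, 0)` and `t₁ ↦ (0, 1)`, hence is onto.
Its kernel is exactly `A₀`: every `x` is congruent modulo `A₀` to `c₀ t₀ + c₁ t₁`, where
`c₀, c₁` are the two integer forms above, and `4 t₀, 16 t₁ ∈ A₀`.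
-/

private abbrev t₀ : Fin 5 → ℤ := ![1, 3, 0, 0, 0]
private abbrev t₁ : Fin 5 → ℤ := ![0, 1, 0, 0, 0]

private def coord₀ (x : Fin 5 → ℤ) : ℤ := x 0 + 3 * x 2 + 2 * x 3 + x 4

private def coord₁ (x : Fin 5 → ℤ) : ℤ := 13 * x 0 + x 1 + x 2 + 13 * x 3 + 5 * x 4

private def toZModProd : (Fin 5 → ℤ) →ₗ[ℤ] ZMod 4 × ZMod 16 where
  toFun x := ((coord₀ x : ZMod 4), (coord₁ x : ZMod 16))
  map_add' x y := by
    simp only [coord₀, coord₁, Pi.add_apply, Prod.mk_add_mk, Prod.mk.injEq]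
    constructor <;> push_cast <;> ring
  map_smul' c x := by
    simp only [coord₀, coord₁, Pi.smul_apply, smul_eq_mul, RingHom.id_apply, Prod.smul_mk,
      zsmul_eq_mul, Prod.mk.injEq]
    constructor <;> push_cast <;> ring

private lemma toZModProd_apply (x : Fin 5 → ℤ) :
    toZModProd x = ((coord₀ x : ZMod 4), (coord₁ x : ZMod 16)) := rfl

private lemma toZModProd_t₀ : toZModProd t₀ = (1, 0) := by decide

private lemma toZModProd_t₁ : toZModProd t₁ = (0, 1) := by decide

private lemma toZModProd_surjective : Function.Surjective toZModProd := by
  rintro ⟨a, b⟩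
  obtain ⟨m, rfl⟩ := ZMod.intCast_surjective a
  obtain ⟨k, rfl⟩ := ZMod.intCast_surjective b
  refine ⟨m • t₀ + k • t₁, ?_⟩
  rw [map_add, map_zsmul, map_zsmul, toZModProd_t₀, toZModProd_t₁]
  simp

private lemma combination_mem_A₀ (a b c d e : ℤ) :
    a • v₁ + b • v₂ + c • v₃ + d • w₁ + e • w₂ ∈ A₀ := by
  have mem {y : Fin 5 → ℤ} (hy : y ∈ ({v₁, v₂, v₃, w₁, w₂} : Set (Fin 5 → ℤ))) (n : ℤ) :
      n • y ∈ A₀ :=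
    A₀.smul_mem n (Submodule.subset_span hy)
  refine A₀.add_mem (A₀.add_mem (A₀.add_mem (A₀.add_mem ?_ ?_) ?_) ?_) ?_ <;>
    exact mem (by simp) _

private lemma four_smul_t₀_mem_A₀ : (4 : ℤ) • t₀ ∈ A₀ := by
  convert combination_mem_A₀ 4 (-1) 0 1 0 using 1
  decide

private lemma sixteen_smul_t₁_mem_A₀ : (16 : ℤ) • t₁ ∈ A₀ := by
  convert combination_mem_A₀ 4 0 (-1) 2 1 using 1
  decide

private lemma sub_coord_smul_mem_A₀ (x : Fin 5 → ℤ) :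
    x - (coord₀ x • t₀ + coord₁ x • t₁) ∈ A₀ := by
  convert combination_mem_A₀ (-4 * x 0 - 3 * x 2 - 5 * x 3 - 2 * x 4) (x 2 + x 3 + x 4)
    (x 0 + x 3 + x 4) (-2 * x 0 - x 2 - 2 * x 3 - x 4) (-x 0 - x 3) using 1
  funext i
  fin_cases i <;> simp [coord₀, coord₁] <;> ring

private lemma A₀_le_ker : A₀ ≤ LinearMap.ker toZModProd := by
  rw [A₀, Submodule.span_le]
  rintro y (rfl | rfl | rfl | rfl | rfl) <;> exact LinearMap.mem_ker.mpr (by decide)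

private lemma ker_le_A₀ : LinearMap.ker toZModProd ≤ A₀ := by
  intro x hx
  rw [LinearMap.mem_ker, toZModProd_apply, Prod.mk_eq_zero,
    ZMod.intCast_zmod_eq_zero_iff_dvd, ZMod.intCast_zmod_eq_zero_iff_dvd] at hx
  obtain ⟨⟨a, ha⟩, ⟨b, hb⟩⟩ := hx
  have hcomb : coord₀ x • t₀ + coord₁ x • t₁ ∈ A₀ := by
    rw [ha, hb, Nat.cast_ofNat, Nat.cast_ofNat, mul_comm, mul_comm (16 : ℤ), mul_smul, mul_smul]
    exact A₀.add_mem (A₀.smul_mem a four_smul_t₀_mem_A₀) (A₀.smul_mem b sixteen_smul_t₁_mem_A₀)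
  simpa only [sub_add_cancel] using A₀.add_mem (sub_coord_smul_mem_A₀ x) hcomb

private lemma ker_toZModProd : LinearMap.ker toZModProd = A₀ :=
  le_antisymm ker_le_A₀ A₀_le_ker

/-- `A/A₀ ≅ ℤ/4 ⊕ ℤ/16`, generated by the images of `t₀ = e₀ + 3e₁` and
`t₁ = e₁` respectively. -/
theorem stmt11 :
    ∃ e : ((Fin 5 → ℤ) ⧸ A₀) ≃+ ZMod 4 × ZMod 16,
      e (Submodule.Quotient.mk ![1, 3, 0, 0, 0]) = (1, 0) ∧
      e (Submodule.Quotient.mk ![0, 1, 0, 0, 0]) = (0, 1) := by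
  let e := (Submodule.quotEquivOfEq _ _ ker_toZModProd.symm).trans
    (toZModProd.quotKerEquivOfSurjective toZModProd_surjective)
  exact ⟨e.toAddEquiv, toZModProd_t₀, toZModProd_t₁⟩
end
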